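/- arXiv:2211.08605 — 2 statements merged into one kernel-verified Lean document; each statement's English description precedes it below -/
import Mathlib

section
/- For every finite simple graph H: LIPCO(H) ≤ 5 if and only if for every orbit ψ of H and every S ∈ IS(ψ), the longest induced cycle length of H_S is at most 5, i.e., LICL(H_S) ≤ 5. -/
/-!
An induced cycle of `H_S` that avoids the merged vertex is an induced cycle of `H`. One through
the merged vertex, cut open there, is an induced path `r` of `H` avoiding `S` whose only
`S`-neighbours are its two ends. If a single vertex of `S` sees both ends, it closes `r` into an
induced cycle of `H`; otherwise two distinct, nonadjacent, orbit-equivalent vertices of `S` extend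
`r` into an induced path between them. Either way the length is preserved, so
`LICL(H_S) ≤ LIPCO(H)`.

Conversely, merging the ends `h, h'` of an induced path (or the base point of an induced cycle)
with `S = {h, h'}` turns it into an induced cycle of `H_S` of the same length, as long as that
length is at least 3; lengths above 5 certainly are.
-/

open scoped Classical

/-- `ψ` is an orbit of the vertices of `H` under its automorphism group. -/
def IsOrbit {V : Type*} (H : SimpleGraph V) (ψ : Finset V) : Prop :=
  ∃ h : V, ∀ u : V, u ∈ ψ ↔ ∃ σ : H ≃g H, σ h = u

/-- `IS(ψ)`: the nonempty subsets of `ψ` that are independent sets in `H`. -/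
noncomputable def indepSubsets {V : Type*} (H : SimpleGraph V) (ψ : Finset V) :
    Finset (Finset V) :=
  ψ.powerset.filter fun S => S.Nonempty ∧ ∀ a ∈ S, ∀ b ∈ S, ¬ H.Adj a b

/-- `H_S`: the graph obtained from `H` by merging all vertices of `S` into the single
new vertex `none` (playing the role of `h_S`), removing duplicate edges. -/
def mergeGraph {V : Type*} (H : SimpleGraph V) (S : Finset V) :
    SimpleGraph (Option {x : V // x ∉ S}) where
  Adj a b :=
    match a, b with
    | none, none => False
    | none, some y => ∃ s ∈ S, H.Adj s y.1
    | some x, none => ∃ s ∈ S, H.Adj s x.1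
    | some x, some y => H.Adj x.1 y.1
  symm := by
    constructor
    rintro (_ | x) (_ | y) hab
    · exact hab
    · exact hab
    · exact hab
    · exact hab.symm
  loopless := by
    constructor
    rintro (_ | x) hab
    · exact hab
    · exact H.irrefl hab

/-- `VertexHom_{H,h}(v)`: the number of homomorphisms from `H` to `G` mapping `h` to `v`. -/
noncomputable def vertexHom {V W : Type*} (H : SimpleGraph V) (G : SimpleGraph W)
    (h : V) (v : W) : ℕ :=
  Nat.card {φ : H →g G // φ h = v}

/-- `OrbitHom_{H,ψ}(v)`: the number of homomorphisms from `H` to `G` mapping some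
vertex of the orbit `ψ` to `v`. -/
noncomputable def orbitHom {V W : Type*} (H : SimpleGraph V) (G : SimpleGraph W)
    (ψ : Finset V) (v : W) : ℕ :=
  Nat.card {φ : H →g G // ∃ h ∈ ψ, φ h = v}

/-- `Hom(H,G)`: the total number of homomorphisms from `H` to `G`. -/
noncomputable def homCount {V W : Type*} (H : SimpleGraph V) (G : SimpleGraph W) : ℕ :=
  Nat.card (H →g G)

/-- A walk is induced if any two adjacent vertices on it are joined by an edge of the walk. -/
def IsInducedWalk {V : Type*} (H : SimpleGraph V) {u w : V} (p : H.Walk u w) : Prop :=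
  ∀ a ∈ p.support, ∀ b ∈ p.support, H.Adj a b → s(a, b) ∈ p.edges

/-- `LICL(H)`: the length of the longest induced cycle of `H` (0 if there is none). -/
noncomputable def LICL {V : Type*} (H : SimpleGraph V) : ℕ :=
  sSup {n | ∃ (u : V) (c : H.Walk u u), c.IsCycle ∧ IsInducedWalk H c ∧ c.length = n}

/-- `LIPCO(H)`: the length of the longest induced simple path between two vertices
`h, h'` of the same orbit of `H`, where `h` may equal `h'`, forming an induced cycle. -/
noncomputable def LIPCO {V : Type*} (H : SimpleGraph V) : ℕ :=
  sSup ({n | ∃ (h h' : V) (p : H.Walk h h'), h ≠ h' ∧ (∃ σ : H ≃g H, σ h = h') ∧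
          p.IsPath ∧ IsInducedWalk H p ∧ p.length = n} ∪
        {n | ∃ (h : V) (c : H.Walk h h), c.IsCycle ∧ IsInducedWalk H c ∧ c.length = n})

/-- An orientation of a simple graph `G`: each edge receives exactly one direction. -/
structure GraphOrientation {V : Type*} (G : SimpleGraph V) where
  rel : V → V → Prop
  consistent : ∀ u v, G.Adj u v ↔ (rel u v ∨ rel v u)
  antisymm : ∀ u v, rel u v → ¬ rel v u

/-- An orientation is acyclic if the resulting digraph has no directed cycle. -/
def GraphOrientation.IsAcyclic {V : Type*} {G : SimpleGraph V} (O : GraphOrientation G) : Prop :=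
  ∀ v : V, ¬ Relation.TransGen O.rel v v


namespace SimpleGraph.Walk

variable {V V' : Type*} {G : SimpleGraph V} {G' : SimpleGraph V'} {u v : V}

lemma exists_map_eq_of_forall_mem_range (f : G ↪g G') (p : G'.Walk (f u) (f v))
    (hp : ∀ w ∈ p.support, w ∈ Set.range f) : ∃ q : G.Walk u v, q.map f.toHom = p := by
  suffices ∀ {u' v' : V'} (p : G'.Walk u' v'), (∀ w ∈ p.support, w ∈ Set.range f) →
      ∀ u v (hu : f u = u') (hv : f v = v'), ∃ q : G.Walk u v, (q.map f.toHom).copy hu hv = p by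
    simpa using this p hp u v rfl rfl
  intro u' v' p
  induction p with
  | nil =>
    rintro - u v rfl hv
    obtain rfl := f.injective hv
    exact ⟨nil, rfl⟩
  | cons h p ih =>
    rintro hp u v rfl rfl
    obtain ⟨w, rfl⟩ := hp _ (List.mem_cons_of_mem _ p.start_mem_support)
    obtain ⟨q, hq⟩ := ih (fun w hw => hp w (List.mem_cons_of_mem _ hw)) w v rfl rfl
    exact ⟨cons (f.map_adj_iff.mp h) q, by simpa using hq⟩

lemma IsCycle.exists_eq_cons_concat {c : G.Walk v v} (hc : c.IsCycle) :
    ∃ (x y : V) (hx : G.Adj v x) (r : G.Walk x y) (hy : G.Adj y v), c = cons hx (r.concat hy) := by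
  cases c with
  | nil => simp at hc
  | cons hx q =>
    have hq : ¬ q.Nil := fun h => hx.ne h.eq.symm
    exact ⟨_, _, hx, q.dropLast, q.adj_penultimate hq, by rw [concat_dropLast]⟩

lemma IsPath.isCycle_cons (h : G.Adj u v) {p : G.Walk v u} (hp : p.IsPath) (hlen : 2 ≤ p.length) :
    (cons h p).IsCycle :=
  isCycle_iff_isPath_tail_and_le_length.mpr ⟨by simpa using hp, by simp; omega⟩

end SimpleGraph.Walk

namespace IsInducedWalk

open SimpleGraph Walk

variable {V V' : Type*} {G : SimpleGraph V} {G' : SimpleGraph V'} {u v : V}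

lemma copy_iff {u' v' : V} (p : G.Walk u v) (hu : u = u') (hv : v = v') :
    IsInducedWalk G (p.copy hu hv) ↔ IsInducedWalk G p := by
  subst hu hv
  rfl

lemma rotate_iff [DecidableEq V] {c : G.Walk v v} (hu : u ∈ c.support) :
    IsInducedWalk G (c.rotate u hu) ↔ IsInducedWalk G c := by
  simp only [IsInducedWalk, mem_support_rotate_iff, (c.rotate_edges u hu).perm.mem_iff]

lemma map (f : G →g G') {p : G.Walk u v} (hp : IsInducedWalk G p)
    (hf : ∀ a ∈ p.support, ∀ b ∈ p.support, G'.Adj (f a) (f b) →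
      ∃ a' ∈ p.support, ∃ b' ∈ p.support, G.Adj a' b' ∧ f a' = f a ∧ f b' = f b) :
    IsInducedWalk G' (p.map f) := by
  intro a' ha b' hb hab
  rw [Walk.support_map, List.mem_map] at ha hb
  obtain ⟨a, ha, rfl⟩ := ha
  obtain ⟨b, hb, rfl⟩ := hb
  obtain ⟨a', ha', b', hb', hadj, hfa, hfb⟩ := hf a ha b hb hab
  rw [← hfa, ← hfb, edges_map, ← Sym2.map_mk]
  exact List.mem_map_of_mem (hp a' ha' b' hb' hadj)

lemma map_iff (f : G ↪g G') {p : G.Walk u v} :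
    IsInducedWalk G' (p.map f.toHom) ↔ IsInducedWalk G p := by
  refine ⟨fun h a ha b hb hab => ?_, fun h =>
    h.map f.toHom fun a ha b hb hab => ⟨a, ha, b, hb, f.map_adj_iff.mp hab, rfl, rfl⟩⟩
  have := h (f a) (by simp [ha]) (f b) (by simp [hb]) (f.map_adj_iff.mpr hab)
  rw [edges_map, ← Sym2.map_mk] at this
  exact (List.mem_map_of_injective (Sym2.map.injective f.injective)).mp this

section Framed

variable {a b x y : V} {ha : G.Adj a x} {r : G.Walk x y} {hb : G.Adj y b}

lemma of_cons_concat (h : IsInducedWalk G (cons ha (r.concat hb)))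
    (har : a ∉ r.support) (hbr : b ∉ r.support) : IsInducedWalk G r := by
  intro c hc d hd hcd
  have := h c (by simp [hc]) d (by simp [hd]) hcd
  simp only [edges_cons, edges_concat, List.concat_eq_append, List.mem_cons, List.mem_append,
    Sym2.eq_iff] at this
  grind

lemma eq_or_eq_of_cons_concat (h : IsInducedWalk G (cons ha (r.concat hb)))
    (har : a ∉ r.support) : ∀ c ∈ r.support, G.Adj a c → c = x ∨ c = y := by
  intro c hc hac
  have := h a (by simp) c (by simp [hc]) hac
  simp only [edges_cons, edges_concat, List.concat_eq_append, List.mem_cons, List.mem_append,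
    Sym2.eq_iff, List.mem_nil_iff, or_false] at this
  rcases this with (⟨-, rfl⟩ | ⟨rfl, -⟩) | he | ⟨rfl, -⟩ | ⟨-, rfl⟩
  · exact Or.inl rfl
  · exact absurd r.start_mem_support har
  · exact absurd (r.fst_mem_support_of_mem_edges he) har
  · exact absurd r.end_mem_support har
  · exact Or.inr rfl

lemma cons_concat (hr : IsInducedWalk G r)
    (hra : ∀ c ∈ r.support, G.Adj a c → s(a, c) = s(a, x) ∨ s(a, c) = s(y, b))
    (hrb : ∀ c ∈ r.support, G.Adj b c → s(b, c) = s(a, x) ∨ s(b, c) = s(y, b))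
    (hab : ¬ G.Adj a b) : IsInducedWalk G (cons ha (r.concat hb)) := by
  intro c hc d hd hcd
  simp only [support_cons, support_concat, List.mem_cons, List.mem_append, List.mem_nil_iff,
    or_false] at hc hd
  simp only [edges_cons, edges_concat, List.concat_eq_append, List.mem_cons, List.mem_append,
    List.mem_nil_iff, or_false]
  have outer : ∀ e, e = s(a, x) ∨ e = s(y, b) → e = s(a, x) ∨ e ∈ r.edges ∨ e = s(y, b) := by
    tauto
  rcases hc with rfl | hc | rfl <;> rcases hd with rfl | hd | rfl
  · exact absurd hcd G.irrefl
  · exact outer _ (hra d hd hcd)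
  · exact absurd hcd hab
  · exact Sym2.eq_swap ▸ outer _ (hra c hc hcd.symm)
  · exact Or.inr (Or.inl (hr c hc d hd hcd))
  · exact Sym2.eq_swap ▸ outer _ (hrb c hc hcd.symm)
  · exact absurd hcd.symm hab
  · exact outer _ (hrb d hd hcd)
  · exact absurd hcd G.irrefl

end Framed

lemma exists_path_of_isCycle {c : G.Walk v v} (hc : c.IsCycle) (hind : IsInducedWalk G c) :
    ∃ (x y : V) (r : G.Walk x y), r.IsPath ∧ IsInducedWalk G r ∧ v ∉ r.support ∧
      G.Adj v x ∧ G.Adj v y ∧ (∀ c ∈ r.support, G.Adj v c → c = x ∨ c = y) ∧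
      r.length + 2 = c.length := by
  obtain ⟨x, y, hx, r, hy, rfl⟩ := hc.exists_eq_cons_concat
  obtain ⟨hr, hvr⟩ := (concat_isPath_iff _).mp ((cons_isCycle_iff _ _).mp hc).1
  exact ⟨x, y, r, hr, hind.of_cons_concat hvr hvr, hvr, hx, hy.symm,
    hind.eq_or_eq_of_cons_concat hvr, by simp⟩

end IsInducedWalk

section Lengths

open SimpleGraph Walk

variable {V : Type*} (G : SimpleGraph V)

def inducedCycleLengths : Set ℕ :=
  {n | ∃ (u : V) (c : G.Walk u u), c.IsCycle ∧ IsInducedWalk G c ∧ c.length = n}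

def orbitPathLengths : Set ℕ :=
  {n | ∃ (h h' : V) (p : G.Walk h h'), h ≠ h' ∧ (∃ σ : G ≃g G, σ h = h') ∧
    p.IsPath ∧ IsInducedWalk G p ∧ p.length = n}

lemma LICL_eq_sSup : LICL G = sSup (inducedCycleLengths G) := rfl

lemma LIPCO_eq_sSup : LIPCO G = sSup (orbitPathLengths G ∪ inducedCycleLengths G) := rfl

variable [Finite V]

lemma bddAbove_inducedCycleLengths : BddAbove (inducedCycleLengths G) := by
  have := Fintype.ofFinite V
  refine ⟨Fintype.card V, ?_⟩
  rintro _ ⟨u, c, hc, -, rfl⟩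
  have := hc.isPath_tail.length_lt
  rw [length_tail] at this
  omega

lemma bddAbove_orbitPathLengths : BddAbove (orbitPathLengths G) := by
  have := Fintype.ofFinite V
  exact ⟨Fintype.card V, fun _ ⟨_, _, _, _, _, hp, _, hn⟩ => hn ▸ hp.length_lt.le⟩

variable {G}

lemma le_LICL {n : ℕ} (hn : n ∈ inducedCycleLengths G) : n ≤ LICL G :=
  le_csSup (bddAbove_inducedCycleLengths G) hn

lemma le_LIPCO {n : ℕ} (hn : n ∈ orbitPathLengths G ∪ inducedCycleLengths G) : n ≤ LIPCO G :=
  le_csSup ((bddAbove_orbitPathLengths G).union (bddAbove_inducedCycleLengths G)) hn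

end Lengths

section Orbits

variable {V : Type*} {H : SimpleGraph V}

lemma IsOrbit.exists_apply_eq {ψ : Finset V} (hψ : IsOrbit H ψ) {a b : V} (ha : a ∈ ψ)
    (hb : b ∈ ψ) : ∃ σ : H ≃g H, σ a = b := by
  obtain ⟨h, hψ⟩ := hψ
  obtain ⟨σa, rfl⟩ := (hψ a).mp ha
  obtain ⟨σb, rfl⟩ := (hψ b).mp hb
  exact ⟨σa.symm.trans σb, by simp⟩

lemma mem_indepSubsets {ψ S : Finset V} :
    S ∈ indepSubsets H ψ ↔ S ⊆ ψ ∧ S.Nonempty ∧ ∀ a ∈ S, ∀ b ∈ S, ¬ H.Adj a b := by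
  simp [indepSubsets]

lemma not_adj_of_mem_pair {a b : V} (hab : ¬ H.Adj a b) :
    ∀ c ∈ ({a, b} : Finset V), ∀ d ∈ ({a, b} : Finset V), ¬ H.Adj c d := by
  simp only [Finset.mem_insert, Finset.mem_singleton]
  rintro c (rfl | rfl) d (rfl | rfl) hcd
  exacts [H.irrefl hcd, hab hcd, hab hcd.symm, H.irrefl hcd]

variable [Fintype V]

variable (H) in
noncomputable def autOrbit (h : V) : Finset V :=
  Finset.univ.filter fun u => ∃ σ : H ≃g H, σ h = u

lemma isOrbit_autOrbit (h : V) : IsOrbit H (autOrbit H h) :=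
  ⟨h, fun u => by simp [autOrbit]⟩

lemma pair_mem_indepSubsets_autOrbit {h h' : V} (hh' : ∃ σ : H ≃g H, σ h = h')
    (hadj : ¬ H.Adj h h') : {h, h'} ∈ indepSubsets H (autOrbit H h) := by
  refine mem_indepSubsets.mpr ⟨?_, by simp, not_adj_of_mem_pair hadj⟩
  intro u hu
  simp only [Finset.mem_insert, Finset.mem_singleton] at hu
  rcases hu with rfl | rfl
  · simpa [autOrbit] using ⟨SimpleGraph.Iso.refl, rfl⟩
  · simpa [autOrbit] using hh'

end Orbits

section Merge

open SimpleGraph Walk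

variable {V : Type*} {H : SimpleGraph V} {S : Finset V}

variable (S) in
noncomputable def mergeMap (v : V) : Option {x : V // x ∉ S} :=
  if hv : v ∈ S then none else some ⟨v, hv⟩

lemma mergeMap_of_mem {v : V} (hv : v ∈ S) : mergeMap S v = none := dif_pos hv

lemma mergeMap_of_notMem {v : V} (hv : v ∉ S) : mergeMap S v = some ⟨v, hv⟩ := dif_neg hv

lemma mergeMap_eq_mergeMap_iff {a b : V} :
    mergeMap S a = mergeMap S b ↔ a = b ∨ a ∈ S ∧ b ∈ S := by
  by_cases ha : a ∈ S <;> by_cases hb : b ∈ S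
  · simp [mergeMap_of_mem ha, mergeMap_of_mem hb, ha, hb]
  · rw [mergeMap_of_mem ha, mergeMap_of_notMem hb]
    grind
  · rw [mergeMap_of_notMem ha, mergeMap_of_mem hb]
    grind
  · rw [mergeMap_of_notMem ha, mergeMap_of_notMem hb]
    simp [ha]

lemma exists_adj_of_mergeGraph_adj {a b : V}
    (h : (mergeGraph H S).Adj (mergeMap S a) (mergeMap S b)) :
    ∃ a' b', H.Adj a' b' ∧ mergeMap S a' = mergeMap S a ∧ mergeMap S b' = mergeMap S b := by
  by_cases ha : a ∈ S <;> by_cases hb : b ∈ S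
  · rw [mergeMap_of_mem ha, mergeMap_of_mem hb] at h
    exact h.elim
  · rw [mergeMap_of_mem ha, mergeMap_of_notMem hb] at h
    obtain ⟨s, hs, hsb⟩ := h
    exact ⟨s, b, hsb, by rw [mergeMap_of_mem hs, mergeMap_of_mem ha], rfl⟩
  · rw [mergeMap_of_notMem ha, mergeMap_of_mem hb] at h
    obtain ⟨s, hs, hsa⟩ := h
    exact ⟨a, s, hsa.symm, rfl, by rw [mergeMap_of_mem hs, mergeMap_of_mem hb]⟩
  · exact ⟨a, b, by rwa [mergeMap_of_notMem ha, mergeMap_of_notMem hb] at h, rfl, rfl⟩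

noncomputable def mergeHom (hS : ∀ a ∈ S, ∀ b ∈ S, ¬ H.Adj a b) : H →g mergeGraph H S where
  toFun := mergeMap S
  map_rel' {a b} hab := by
    by_cases ha : a ∈ S <;> by_cases hb : b ∈ S
    · exact (hS a ha b hb hab).elim
    · rw [mergeMap_of_mem ha, mergeMap_of_notMem hb]
      exact ⟨a, ha, hab⟩
    · rw [mergeMap_of_notMem ha, mergeMap_of_mem hb]
      exact ⟨b, hb, hab.symm⟩
    · rw [mergeMap_of_notMem ha, mergeMap_of_notMem hb]
      exact hab

lemma length_mem_inducedCycleLengths_mergeGraph {h h' x : V} (ha : H.Adj h x)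
    {q : H.Walk x h'} (hq : q.IsPath) (hhq : h ∈ q.support → h = h') (hlen : 2 ≤ q.length)
    (hind : IsInducedWalk H (cons ha q)) (hhh' : ¬ H.Adj h h') :
    (cons ha q).length ∈ inducedCycleLengths (mergeGraph H {h, h'}) := by
  set f := mergeHom (not_adj_of_mem_pair hhh')
  have hmem : ∀ c ∈ ({h, h'} : Finset V), c ∈ (cons ha q).support := by
    simp only [Finset.mem_insert, Finset.mem_singleton]
    rintro c (rfl | rfl) <;> simp
  have hqS : ∀ c ∈ q.support, c ∈ ({h, h'} : Finset V) → c = h' := by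
    simp only [Finset.mem_insert, Finset.mem_singleton]
    rintro c hc (rfl | rfl)
    exacts [hhq hc, rfl]
  have hf : f h' = f h := mergeMap_eq_mergeMap_iff.mpr (Or.inr ⟨by simp, by simp⟩)
  refine ⟨f h, ((cons ha q).map f).copy rfl hf, ?_, (IsInducedWalk.copy_iff _ _ _).mpr ?_,
    by simp⟩
  · rw [map_cons, copy_cons]
    refine IsPath.isCycle_cons _ ?_ (by simpa using hlen)
    rw [isPath_copy, isPath_def, Walk.support_map]
    refine hq.support_nodup.map_on fun a ha b hb hab => ?_
    rcases mergeMap_eq_mergeMap_iff.mp hab with hab | ⟨haS, hbS⟩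
    · exact hab
    · rw [hqS a ha haS, hqS b hb hbS]
  · -- An edge of `H_S` lifts to an edge of `H` whose merged end may be either of `h, h'`, and both
    -- lie on the walk.
    have hback : ∀ c ∈ (cons ha q).support, ∀ c', f c' = f c → c' ∈ (cons ha q).support := by
      intro c hc c' hc'
      rcases mergeMap_eq_mergeMap_iff.mp hc' with rfl | ⟨hc'S, -⟩
      exacts [hc, hmem c' hc'S]
    refine hind.map f fun a haq b hbq hab => ?_
    obtain ⟨a', b', hadj, ha', hb'⟩ := exists_adj_of_mergeGraph_adj hab
    exact ⟨a', hback a haq a' ha', b', hback b hbq b' hb', hadj, ha', hb'⟩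

lemma exists_mem_inducedCycleLengths_mergeGraph [Fintype V] {n : ℕ}
    (hn : n ∈ orbitPathLengths H ∪ inducedCycleLengths H) (h3 : 3 ≤ n) :
    ∃ ψ, IsOrbit H ψ ∧ ∃ S ∈ indepSubsets H ψ, n ∈ inducedCycleLengths (mergeGraph H S) := by
  rcases hn with ⟨h, h', p, hne, hσ, hp, hind, rfl⟩ | ⟨h, c, hc, hind, rfl⟩
  · obtain ⟨x, ha, q, rfl⟩ := exists_eq_cons_of_ne hne p
    have hnadj : ¬ H.Adj h h' := fun hadj => by
      have := hp.length_eq_one_of_mem_edges (hind _ (by simp) _ (by simp) hadj)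
      omega
    obtain ⟨hq, hhq⟩ := (cons_isPath_iff _ _).mp hp
    exact ⟨_, isOrbit_autOrbit h, _, pair_mem_indepSubsets_autOrbit hσ hnadj,
      length_mem_inducedCycleLengths_mergeGraph ha hq (absurd · hhq) (by simpa using h3) hind
        hnadj⟩
  · cases c with
    | nil => simp at hc
    | cons ha q =>
      obtain ⟨hq, -⟩ := (cons_isCycle_iff _ _).mp hc
      exact ⟨_, isOrbit_autOrbit h, {h, h}, pair_mem_indepSubsets_autOrbit ⟨Iso.refl, rfl⟩
        H.irrefl, length_mem_inducedCycleLengths_mergeGraph ha hq (fun _ => rfl)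
          (by simpa using h3) hind H.irrefl⟩

end Merge

section Unmerge

open SimpleGraph Walk

variable {V : Type*}

lemma length_add_two_mem_orbitPathLengths_union {G : SimpleGraph V} {S : Set V}
    (hS : ∀ a ∈ S, ∀ b ∈ S, ¬ G.Adj a b) (horb : ∀ a ∈ S, ∀ b ∈ S, ∃ σ : G ≃g G, σ a = b)
    {x y : V} {r : G.Walk x y} (hr : r.IsPath) (hri : IsInducedWalk G r) (hlen : 1 ≤ r.length)
    (hSr : ∀ s ∈ S, s ∉ r.support) (hSadj : ∀ s ∈ S, ∀ v ∈ r.support, G.Adj s v → v = x ∨ v = y)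
    (hx : ∃ s ∈ S, G.Adj s x) (hy : ∃ s ∈ S, G.Adj s y) :
    r.length + 2 ∈ orbitPathLengths G ∪ inducedCycleLengths G := by
  by_cases hxy : ∃ s ∈ S, G.Adj s x ∧ G.Adj s y
  · obtain ⟨s, hs, hsx, hsy⟩ := hxy
    have hframe : ∀ c ∈ r.support, G.Adj s c → s(s, c) = s(s, x) ∨ s(s, c) = s(y, s) := by
      intro c hc hsc
      rcases hSadj s hs c hc hsc with rfl | rfl
      exacts [Or.inl rfl, Or.inr Sym2.eq_swap]
    exact Or.inr ⟨s, cons hsx (r.concat hsy.symm),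
      IsPath.isCycle_cons _ (hr.concat (hSr s hs) hsy.symm) (by simpa using hlen),
      hri.cons_concat hframe hframe G.irrefl, by simp⟩
  · push Not at hxy
    obtain ⟨s, hs, hsx⟩ := hx
    obtain ⟨t, ht, hty⟩ := hy
    have hsy : ¬ G.Adj s y := hxy s hs hsx
    have htx : ¬ G.Adj t x := fun htx => hxy t ht htx hty
    have hst : s ≠ t := by
      rintro rfl
      exact hsy hty
    refine Or.inl ⟨s, t, cons hsx (r.concat hty.symm), hst, horb s hs t ht,
      (hr.concat (hSr t ht) hty.symm).cons (by simp [hSr s hs, hst]),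
      hri.cons_concat ?_ ?_ (hS s hs t ht), by simp⟩
    · intro c hc hsc
      rcases hSadj s hs c hc hsc with rfl | rfl
      exacts [Or.inl rfl, absurd hsc hsy]
    · intro c hc htc
      rcases hSadj t ht c hc htc with rfl | rfl
      exacts [absurd htc htx, Or.inr Sym2.eq_swap]

variable {H : SimpleGraph V} {S : Finset V}

variable (H S) in
def mergeGraphEmbedding : H.induce {v | v ∉ S} ↪g mergeGraph H S where
  toFun v := some ⟨v.1, v.2⟩
  inj' a b hab := by simpa [Subtype.ext_iff] using hab
  map_rel_iff' := Iff.rfl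

lemma mem_range_mergeGraphEmbedding {o : Option {x : V // x ∉ S}} (ho : o ≠ none) :
    o ∈ Set.range (mergeGraphEmbedding H S) := by
  obtain ⟨x, rfl⟩ := Option.ne_none_iff_exists'.mp ho
  exact ⟨x, rfl⟩

lemma mergeGraph_adj_none_mergeGraphEmbedding {x : {v : V // v ∉ S}} :
    (mergeGraph H S).Adj none (mergeGraphEmbedding H S x) ↔ ∃ s ∈ S, H.Adj s x := Iff.rfl

lemma length_mem_inducedCycleLengths_of_none_notMem {u : Option {x : V // x ∉ S}}
    {c : (mergeGraph H S).Walk u u} (hc : c.IsCycle) (hind : IsInducedWalk _ c)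
    (hn : none ∉ c.support) : c.length ∈ inducedCycleLengths H := by
  set e := mergeGraphEmbedding H S
  set ι := Embedding.induce {v | v ∉ S} (G := H)
  have hrange : ∀ w ∈ c.support, w ∈ Set.range e :=
    fun w hw => mem_range_mergeGraphEmbedding fun h => hn (h ▸ hw)
  obtain ⟨u, rfl⟩ := hrange u c.start_mem_support
  obtain ⟨c, rfl⟩ := exists_map_eq_of_forall_mem_range e c hrange
  exact ⟨_, c.map ι.toHom, hc.of_map.map ι.injective,
    (IsInducedWalk.map_iff ι).mpr ((IsInducedWalk.map_iff e).mp hind),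
    by rw [length_map, length_map]⟩

lemma length_mem_orbitPathLengths_union_of_none_mem (hS : ∀ a ∈ S, ∀ b ∈ S, ¬ H.Adj a b)
    (horb : ∀ a ∈ S, ∀ b ∈ S, ∃ σ : H ≃g H, σ a = b) {u : Option {x : V // x ∉ S}}
    {c : (mergeGraph H S).Walk u u} (hc : c.IsCycle) (hind : IsInducedWalk _ c)
    (hn : none ∈ c.support) : c.length ∈ orbitPathLengths H ∪ inducedCycleLengths H := by
  obtain ⟨x, y, r, hr, hri, hnone, hx, hy, hnbr, hlen⟩ :=
    ((IsInducedWalk.rotate_iff hn).mpr hind).exists_path_of_isCycle (hc.rotate hn)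
  set e := mergeGraphEmbedding H S
  set ι := Embedding.induce {v | v ∉ S} (G := H)
  have hrange : ∀ w ∈ r.support, w ∈ Set.range e :=
    fun w hw => mem_range_mergeGraphEmbedding fun h => hnone (h ▸ hw)
  obtain ⟨x, rfl⟩ := hrange x r.start_mem_support
  obtain ⟨y, rfl⟩ := hrange y r.end_mem_support
  obtain ⟨r, rfl⟩ := exists_map_eq_of_forall_mem_range e r hrange
  have h3 := hc.three_le_length
  rw [length_rotate, length_map] at hlen
  rw [← hlen, ← length_map ι.toHom]
  refine length_add_two_mem_orbitPathLengths_union (S := (S : Set V)) hS horb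
    (hr.of_map.map ι.injective) ((IsInducedWalk.map_iff ι).mpr ((IsInducedWalk.map_iff e).mp hri))
    (by simp; omega) ?_ ?_ (mergeGraph_adj_none_mergeGraphEmbedding.mp hx)
    (mergeGraph_adj_none_mergeGraphEmbedding.mp hy)
  · intro s hs hsr
    rw [Walk.support_map, List.mem_map] at hsr
    obtain ⟨w, -, rfl⟩ := hsr
    exact w.2 hs
  · intro s hs v hv hsv
    rw [Walk.support_map, List.mem_map] at hv
    obtain ⟨w, hw, rfl⟩ := hv
    rcases hnbr (e w) (by simp [hw]) (mergeGraph_adj_none_mergeGraphEmbedding.mpr ⟨s, hs, hsv⟩)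
      with h | h
    exacts [Or.inl (by rw [e.injective h]), Or.inr (by rw [e.injective h])]

lemma inducedCycleLengths_mergeGraph_subset (hS : ∀ a ∈ S, ∀ b ∈ S, ¬ H.Adj a b)
    (horb : ∀ a ∈ S, ∀ b ∈ S, ∃ σ : H ≃g H, σ a = b) :
    inducedCycleLengths (mergeGraph H S) ⊆ orbitPathLengths H ∪ inducedCycleLengths H := by
  rintro _ ⟨u, c, hc, hind, rfl⟩
  by_cases hn : none ∈ c.support
  · exact length_mem_orbitPathLengths_union_of_none_mem hS horb hc hind hn
  · exact Or.inr (length_mem_inducedCycleLengths_of_none_notMem hc hind hn)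

lemma LICL_mergeGraph_le_LIPCO [Finite V] {ψ : Finset V} (hψ : IsOrbit H ψ)
    (hS : S ∈ indepSubsets H ψ) : LICL (mergeGraph H S) ≤ LIPCO H := by
  obtain ⟨hSψ, -, hSind⟩ := mem_indepSubsets.mp hS
  rw [LICL_eq_sSup]
  exact csSup_le' fun n hn => le_LIPCO (inducedCycleLengths_mergeGraph_subset hSind
    (fun a ha b hb => hψ.exists_apply_eq (hSψ ha) (hSψ hb)) hn)

end Unmerge

theorem lipco_le_five_iff_licl_merge_le_five_general {V : Type*} [Fintype V]
    (H : SimpleGraph V) :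
    LIPCO H ≤ 5 ↔
      ∀ ψ : Finset V, IsOrbit H ψ → ∀ S ∈ indepSubsets H ψ,
        LICL (mergeGraph H S) ≤ 5 := by
  refine ⟨fun hH ψ hψ S hS => (LICL_mergeGraph_le_LIPCO hψ hS).trans hH, fun hH => ?_⟩
  rw [LIPCO_eq_sSup]
  refine csSup_le' fun n hn => ?_
  by_contra! h5
  obtain ⟨ψ, hψ, S, hS, hnS⟩ := exists_mem_inducedCycleLengths_mergeGraph hn (by omega)
  exact h5.not_ge ((le_LICL hnS).trans (hH ψ hψ S hS))

/-- `LIPCO(H) ≤ 5` iff for every orbit `ψ` of `H` and every `S ∈ IS(ψ)`,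
the longest induced cycle of `H_S` has length at most 5. -/
theorem lipco_le_five_iff_licl_merge_le_five {V : Type*} [Fintype V] [DecidableEq V]
    (H : SimpleGraph V) :
    LIPCO H ≤ 5 ↔
      ∀ ψ : Finset V, IsOrbit H ψ → ∀ S ∈ indepSubsets H ψ,
        LICL (mergeGraph H S) ≤ 5 :=
  lipco_le_five_iff_licl_merge_le_five_general H
end

section
/- Let H be a finite simple graph with LIPCO(H) > 5. Then there exist an orbit ψ of H and a set S ∈ IS(ψ) such that the graph H_S has an induced cycle of length at least 6, i.e., LICL(H_S) > 5. Specifically, if the longest induced path between two vertices h, h' of the same orbit has h = h', then H itself has an induced cycle of length at least 6 and one may take S = {h}; if h ≠ h', then S = {h, h'} ∈ IS(ψ) and merging h and h' turns that induced path into an induced cycle of length at least 6 in H_S. -/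
open scoped Classical

/-!
The value of `LIPCO H` is attained by an induced walk from some `h` to `σ h`, `σ` an automorphism:
an induced cycle through `h`, or an induced path between `h ≠ σ h`, which are then non-adjacent
since the path is induced and longer than one edge. Merging `S = {h, σ h}` (a singleton in the
cycle case) turns the walk into a closed walk through `h_S` whose inner vertices avoid `S`, so it
is a cycle of the same length; and every edge of `H_S` between its vertices lifts to an edge of
`H` between vertices of the walk, so it is still induced.
-/

namespace SimpleGraph

variable {V : Type*} {H : SimpleGraph V} {S : Finset V}

noncomputable def mergeVert (S : Finset V) (v : V) : Option {x : V // x ∉ S} :=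
  if hv : v ∈ S then none else some ⟨v, hv⟩

lemma mergeVert_of_mem {v : V} (hv : v ∈ S) : mergeVert S v = none := dif_pos hv

lemma mergeVert_of_notMem {v : V} (hv : v ∉ S) : mergeVert S v = some ⟨v, hv⟩ := dif_neg hv

lemma mergeVert_eq_mergeVert_iff {a b : V} :
    mergeVert S a = mergeVert S b ↔ a = b ∨ a ∈ S ∧ b ∈ S := by
  by_cases ha : a ∈ S <;> by_cases hb : b ∈ S
  · simp [mergeVert_of_mem, ha, hb]
  · simpa [mergeVert_of_mem ha, mergeVert_of_notMem hb, hb] using ne_of_mem_of_not_mem ha hb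
  · simpa [mergeVert_of_notMem ha, mergeVert_of_mem hb, ha] using (ne_of_mem_of_not_mem hb ha).symm
  · simp [mergeVert_of_notMem ha, mergeVert_of_notMem hb, ha]

lemma exists_adj_of_mergeGraph_adj {a b : V}
    (h : (mergeGraph H S).Adj (mergeVert S a) (mergeVert S b)) :
    ∃ a' ∈ insert a S, ∃ b' ∈ insert b S, H.Adj a' b' ∧
      mergeVert S a' = mergeVert S a ∧ mergeVert S b' = mergeVert S b := by
  by_cases ha : a ∈ S <;> by_cases hb : b ∈ S
  · rw [mergeVert_of_mem ha, mergeVert_of_mem hb] at h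
    exact h.elim
  · rw [mergeVert_of_mem ha, mergeVert_of_notMem hb] at h
    obtain ⟨s, hs, hsb⟩ := h
    exact ⟨s, Finset.mem_insert_of_mem hs, b, Finset.mem_insert_self _ _, hsb,
      by rw [mergeVert_of_mem hs, mergeVert_of_mem ha], rfl⟩
  · rw [mergeVert_of_notMem ha, mergeVert_of_mem hb] at h
    obtain ⟨s, hs, hsa⟩ := h
    exact ⟨a, Finset.mem_insert_self _ _, s, Finset.mem_insert_of_mem hs, hsa.symm, rfl,
      by rw [mergeVert_of_mem hs, mergeVert_of_mem hb]⟩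
  · rw [mergeVert_of_notMem ha, mergeVert_of_notMem hb] at h
    exact ⟨a, Finset.mem_insert_self _ _, b, Finset.mem_insert_self _ _, h, rfl, rfl⟩

variable (H S) in
noncomputable def mergeHom (hS : ∀ a ∈ S, ∀ b ∈ S, ¬ H.Adj a b) :
    H →g mergeGraph H S where
  toFun := mergeVert S
  map_rel' {a b} hab := by
    by_cases ha : a ∈ S <;> by_cases hb : b ∈ S
    · exact (hS a ha b hb hab).elim
    · rw [mergeVert_of_mem ha, mergeVert_of_notMem hb]
      exact ⟨a, ha, hab⟩
    · rw [mergeVert_of_notMem ha, mergeVert_of_mem hb]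
      exact ⟨b, hb, hab.symm⟩
    · rw [mergeVert_of_notMem ha, mergeVert_of_notMem hb]
      exact hab

@[simp] lemma mergeHom_apply {hS : ∀ a ∈ S, ∀ b ∈ S, ¬ H.Adj a b} (v : V) :
    mergeHom H S hS v = mergeVert S v := rfl

lemma mergeHom_of_mem {hS : ∀ a ∈ S, ∀ b ∈ S, ¬ H.Adj a b} {v : V} (hv : v ∈ S) :
    mergeHom H S hS v = none := mergeVert_of_mem hv

lemma isInducedWalk_copy {G : SimpleGraph V} {u v u' v' : V} (p : G.Walk u v)
    (hu : u = u') (hv : v = v') : IsInducedWalk G (p.copy hu hv) ↔ IsInducedWalk G p := by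
  subst hu hv
  rfl

lemma IsInducedWalk.map_mergeHom {hS : ∀ a ∈ S, ∀ b ∈ S, ¬ H.Adj a b} {u v : V}
    {p : H.Walk u v} (hp : IsInducedWalk H p) (hSp : ∀ s ∈ S, s ∈ p.support) :
    IsInducedWalk (mergeGraph H S) (p.map (mergeHom H S hS)) := by
  have hsupp : ∀ a, a ∈ p.support → ∀ a' ∈ insert a S, a' ∈ p.support := by
    intro a ha a' ha'
    rcases Finset.mem_insert.mp ha' with rfl | ha'
    exacts [ha, hSp a' ha']
  intro x hx y hy hxy
  rw [Walk.support_map] at hx hy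
  obtain ⟨a, ha, rfl⟩ := List.mem_map.mp hx
  obtain ⟨b, hb, rfl⟩ := List.mem_map.mp hy
  obtain ⟨a', ha', b', hb', hab', hφa, hφb⟩ := exists_adj_of_mergeGraph_adj hxy
  rw [Walk.edges_map, mergeHom_apply, mergeHom_apply, ← hφa, ← hφb]
  exact List.mem_map_of_mem (hp a' (hsupp a ha a' ha') b' (hsupp b hb b' hb') hab')

lemma isCycle_map_mergeHom {hS : ∀ a ∈ S, ∀ b ∈ S, ¬ H.Adj a b} {u v : V} (p : H.Walk u v)
    (hu : u ∈ S) (hv : v ∈ S) (hlen : 3 ≤ p.length) (htail : p.support.tail.Nodup)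
    (htailS : ∀ w ∈ p.support.tail, w ∈ S → w = v) :
    ((p.map (mergeHom H S hS)).copy (mergeHom_of_mem hu) (mergeHom_of_mem hv)).IsCycle := by
  have hlen' : 3 ≤ ((p.map (mergeHom H S hS)).copy (mergeHom_of_mem hu)
      (mergeHom_of_mem hv)).length := by
    rwa [Walk.length_copy, Walk.length_map]
  refine Walk.isCycle_iff_isPath_tail_and_le_length.mpr ⟨?_, hlen'⟩
  rw [Walk.isPath_def, Walk.support_tail_of_not_nil _ (Walk.not_nil_iff_lt_length.mpr (by omega)),
    Walk.support_copy, Walk.support_map, ← List.map_tail]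
  refine htail.map_on fun a ha b hb hab => ?_
  rcases mergeVert_eq_mergeVert_iff.mp hab with h | ⟨haS, hbS⟩
  exacts [h, (htailS a ha haS).trans (htailS b hb hbS).symm]

lemma Walk.IsCycle.length_le_LICL [Fintype V] {G : SimpleGraph V} {u : V} {c : G.Walk u u}
    (hc : c.IsCycle) (hind : IsInducedWalk G c) : c.length ≤ LICL G := by
  refine le_csSup ⟨Fintype.card V, ?_⟩ ⟨u, c, hc, hind, rfl⟩
  rintro n ⟨w, c', hc', -, rfl⟩
  simpa using hc'.support_nodup.length_le_card

lemma forall_mem_pair_not_adj {u v : V} (huv : ¬ H.Adj u v) :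
    ∀ a ∈ ({u, v} : Finset V), ∀ b ∈ ({u, v} : Finset V), ¬ H.Adj a b := by
  simp only [Finset.mem_insert, Finset.mem_singleton, forall_eq_or_imp, forall_eq]
  exact ⟨⟨H.irrefl, huv⟩, fun h => huv h.symm, H.irrefl⟩

lemma pair_mem_indepSubsets {ψ : Finset V} {u v : V} (hu : u ∈ ψ) (hv : v ∈ ψ)
    (huv : ¬ H.Adj u v) : {u, v} ∈ indepSubsets H ψ := by
  rw [indepSubsets, Finset.mem_filter, Finset.mem_powerset, Finset.insert_subset_iff,
    Finset.singleton_subset_iff]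
  exact ⟨⟨hu, hv⟩, Finset.insert_nonempty _ _, forall_mem_pair_not_adj huv⟩

/-- `p.support.tail.Nodup ∧ (u ∈ p.support.tail → u = v)` says that `p` is a path, or a cycle
when `u = v`: the two alternatives in the definition of `LIPCO`. -/
lemma exists_induced_walk_of_lt_LIPCO {n : ℕ} (hn : 1 ≤ n) (h : n < LIPCO H) :
    ∃ (u v : V) (p : H.Walk u v), (∃ σ : H ≃g H, σ u = v) ∧ ¬ H.Adj u v ∧
      p.support.tail.Nodup ∧ (u ∈ p.support.tail → u = v) ∧ IsInducedWalk H p ∧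
      n < p.length := by
  rw [LIPCO] at h
  obtain ⟨m, hm, hnm⟩ := exists_lt_of_lt_csSup' h
  rcases hm with ⟨u, v, p, hne, hσ, hp, hind, rfl⟩ | ⟨u, c, hc, hind, rfl⟩
  · have hnodup : (u :: p.support.tail).Nodup := by
      rw [Walk.cons_tail_support]; exact hp.support_nodup
    refine ⟨u, v, p, hσ, fun hadj => ?_, hnodup.of_cons, fun hu => ?_, hind, hnm⟩
    · have := hp.length_eq_one_of_mem_edges (hind u p.start_mem_support v p.end_mem_support hadj)
      omega
    · exact (List.nodup_cons.mp hnodup).1 hu |>.elim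
  · exact ⟨u, u, c, ⟨RelIso.refl _, rfl⟩, H.irrefl, hc.support_nodup, fun _ => rfl, hind,
      hnm⟩

end SimpleGraph

open SimpleGraph

theorem exists_merge_with_long_induced_cycle_general {V : Type*} [Fintype V]
    (H : SimpleGraph V) (hlip : 5 < LIPCO H) :
    ∃ ψ : Finset V, IsOrbit H ψ ∧ ∃ S ∈ indepSubsets H ψ,
      (∃ (u : Option {x : V // x ∉ S}) (c : (mergeGraph H S).Walk u u),
        c.IsCycle ∧ IsInducedWalk (mergeGraph H S) c ∧ 6 ≤ c.length) ∧
      5 < LICL (mergeGraph H S) := by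
  obtain ⟨u, v, p, ⟨σ, hσ⟩, huv, htail, hu, hind, hlen⟩ :=
    exists_induced_walk_of_lt_LIPCO (by norm_num) hlip
  set ψ := Finset.univ.filter fun w => ∃ τ : H ≃g H, τ u = w
  have hu_mem : u ∈ ({u, v} : Finset V) := Finset.mem_insert_self _ _
  have hv_mem : v ∈ ({u, v} : Finset V) := Finset.mem_insert_of_mem (Finset.mem_singleton_self _)
  set c := (p.map (mergeHom H _ (forall_mem_pair_not_adj huv))).copy
    (mergeHom_of_mem hu_mem) (mergeHom_of_mem hv_mem)
  have hc : c.IsCycle := isCycle_map_mergeHom p hu_mem hv_mem (by omega) htail fun w hw hwS => by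
    rcases Finset.mem_insert.mp hwS with rfl | hwv
    exacts [hu hw, Finset.mem_singleton.mp hwv]
  have hcind : IsInducedWalk _ c := (isInducedWalk_copy _ _ _).mpr <| hind.map_mergeHom <| by
    simp [p.start_mem_support, p.end_mem_support]
  have hclen : c.length = p.length := by rw [Walk.length_copy, Walk.length_map]
  refine ⟨ψ, ⟨u, by simp [ψ]⟩, {u, v}, pair_mem_indepSubsets ?_ ?_ huv,
    ⟨none, c, hc, hcind, by omega⟩, by have := hc.length_le_LICL hcind; omega⟩
  exacts [by simpa [ψ] using ⟨RelIso.refl _, rfl⟩, by simpa [ψ] using ⟨σ, hσ⟩]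

/-- if `LIPCO(H) > 5` then there are an orbit `ψ` of `H` and a set
`S ∈ IS(ψ)` such that `H_S` contains an induced cycle of length at least 6,
i.e. `LICL(H_S) > 5`. -/
theorem exists_merge_with_long_induced_cycle {V : Type*} [Fintype V] [DecidableEq V]
    (H : SimpleGraph V) (hlip : 5 < LIPCO H) :
    ∃ ψ : Finset V, IsOrbit H ψ ∧ ∃ S ∈ indepSubsets H ψ,
      (∃ (u : Option {x : V // x ∉ S}) (c : (mergeGraph H S).Walk u u),
        c.IsCycle ∧ IsInducedWalk (mergeGraph H S) c ∧ 6 ≤ c.length) ∧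
      5 < LICL (mergeGraph H S) :=
  exists_merge_with_long_induced_cycle_general H hlip
end
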